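/- arXiv:2307.12884 — 2 statements merged into one kernel-verified Lean document; each statement's English description precedes it below -/
import Mathlib

section
/- Let D₁ and D₂ be finite multisets of points in the open half-plane ℝ²_< = {(b,d) : b < d} with the ℓ^∞ metric, such that every point of D₁ ∪ D₂ has distance to the diagonal Δ strictly greater than 2·diam(D₁ ∪ D₂), and |D₁| = |D₂| = N. Then the p-Wasserstein distance between the persistence diagrams D₁ and D₂ is achieved by a perfect matching; that is, W_p(D₁, D₂)^p = min over bijections σ : D₁ → D₂ of Σ_{x ∈ D₁} d(x, σ(x))^p. -/
open scoped Classical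

/-- A persistence diagram: a finite multiset of points of the plane (ℓ^∞ metric). -/
abbrev PD := Multiset (ℝ × ℝ)

/-- The ℓ^∞ distance from a point of the plane to the diagonal `Δ = {(t,t)}`. -/
noncomputable def ddiag (x : ℝ × ℝ) : ℝ := |x.2 - x.1| / 2

/-- The `p`-th power of the `p`-cost of a partial matching `M` (a multiset of pairs whose
first projections form a sub-multiset of `D₁` and second projections a sub-multiset of
`D₂`): matched pairs pay `dist^p` and unmatched points pay their distance to the
diagonal to the `p`. -/
noncomputable def costp (p : ℝ) (D₁ D₂ : PD) (M : Multiset ((ℝ × ℝ) × (ℝ × ℝ))) : ℝ :=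
  (M.map fun q => dist q.1 q.2 ^ p).sum +
    ((D₁ - M.map Prod.fst).map fun z => ddiag z ^ p).sum +
    ((D₂ - M.map Prod.snd).map fun z => ddiag z ^ p).sum

/-- `M` is a partial matching between the diagrams `D₁` and `D₂`. -/
def IsPartialMatching (D₁ D₂ : PD) (M : Multiset ((ℝ × ℝ) × (ℝ × ℝ))) : Prop :=
  M.map Prod.fst ≤ D₁ ∧ M.map Prod.snd ≤ D₂

/-- The `p`-th power of the `p`-Wasserstein distance between persistence diagrams:
the infimum of the `p`-th powers of costs of partial matchings. -/
noncomputable def WDpow (p : ℝ) (D₁ D₂ : PD) : ℝ :=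
  sInf {c : ℝ | ∃ M, IsPartialMatching D₁ D₂ M ∧ c = costp p D₁ D₂ M}

/-! Far from the diagonal, every point of one diagram is closer to every point of the other
than to the diagonal. So pairing off the unmatched points of a partial matching, in any way,
does not increase its cost, and perfect matchings suffice. They are finitely many, so a
cheapest one exists and attains the infimum. -/

namespace Multiset

variable {α β : Type*}

theorem exists_map_fst_eq_map_snd_eq (s : Multiset α) (t : Multiset β)
    (h : card s = card t) : ∃ M : Multiset (α × β), M.map Prod.fst = s ∧ M.map Prod.snd = t := by
  have hlen : s.toList.length = t.toList.length := by simpa using h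
  refine ⟨↑(s.toList.zip t.toList), ?_, ?_⟩
  · rw [map_coe, List.map_fst_zip hlen.le, coe_toList]
  · rw [map_coe, List.map_snd_zip hlen.ge, coe_toList]

theorem le_card_nsmul_of_forall_mem {s t : Multiset α} (h : ∀ a ∈ s, a ∈ t) :
    s ≤ card s • t := by
  rw [le_iff_count]
  intro a
  by_cases ha : a ∈ s
  · calc count a s ≤ card s := count_le_card a s
      _ ≤ card s * count a t := Nat.le_mul_of_pos_right _ (count_pos.2 (h a ha))
      _ = count a (card s • t) := (count_nsmul a _ t).symm
  · simp [count_eq_zero_of_notMem ha]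

theorem finite_setOf_map_fst_eq_map_snd_eq (s : Multiset α) (t : Multiset β) :
    {M : Multiset (α × β) | M.map Prod.fst = s ∧ M.map Prod.snd = t}.Finite := by
  refine (finite_toSet (card s • s ×ˢ t).powerset).subset ?_
  rintro M ⟨hs, ht⟩
  have hmem : ∀ q ∈ M, q ∈ s ×ˢ t := fun q hq =>
    mem_product.2 ⟨hs ▸ mem_map_of_mem _ hq, ht ▸ mem_map_of_mem _ hq⟩
  simpa [← hs] using le_card_nsmul_of_forall_mem hmem

end Multiset

theorem costp_of_map_fst_eq_of_map_snd_eq (p : ℝ) {D₁ D₂ : PD} {M : Multiset ((ℝ × ℝ) × (ℝ × ℝ))}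
    (h₁ : M.map Prod.fst = D₁) (h₂ : M.map Prod.snd = D₂) :
    costp p D₁ D₂ M = (M.map fun q => dist q.1 q.2 ^ p).sum := by
  simp [costp, h₁, h₂]

theorem exists_perfect_matching_costp_le {p : ℝ} (hp : 0 ≤ p) {D₁ D₂ : PD}
    (hcard : Multiset.card D₁ = Multiset.card D₂)
    (hclose : ∀ z ∈ D₁, ∀ w ∈ D₂, dist z w ≤ ddiag z)
    {M : Multiset ((ℝ × ℝ) × (ℝ × ℝ))} (hM : IsPartialMatching D₁ D₂ M) :
    ∃ M', M'.map Prod.fst = D₁ ∧ M'.map Prod.snd = D₂ ∧ costp p D₁ D₂ M' ≤ costp p D₁ D₂ M := by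
  obtain ⟨hM₁, hM₂⟩ := hM
  set L₁ := D₁ - M.map Prod.fst
  set L₂ := D₂ - M.map Prod.snd
  obtain ⟨Z, hZ₁, hZ₂⟩ : ∃ Z : Multiset ((ℝ × ℝ) × (ℝ × ℝ)),
      Z.map Prod.fst = L₁ ∧ Z.map Prod.snd = L₂ := by
    refine Multiset.exists_map_fst_eq_map_snd_eq _ _ ?_
    simp [L₁, L₂, Multiset.card_sub hM₁, Multiset.card_sub hM₂, hcard]
  have hfst : (M + Z).map Prod.fst = D₁ := by
    rw [Multiset.map_add, hZ₁, add_tsub_cancel_of_le hM₁]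
  have hsnd : (M + Z).map Prod.snd = D₂ := by
    rw [Multiset.map_add, hZ₂, add_tsub_cancel_of_le hM₂]
  refine ⟨M + Z, hfst, hsnd, ?_⟩
  have hZ : ∀ q ∈ Z, dist q.1 q.2 ^ p ≤ ddiag q.1 ^ p := by
    intro q hq
    have hq₁ : q.1 ∈ L₁ := hZ₁ ▸ Multiset.mem_map_of_mem _ hq
    have hq₂ : q.2 ∈ L₂ := hZ₂ ▸ Multiset.mem_map_of_mem _ hq
    exact Real.rpow_le_rpow dist_nonneg
      (hclose _ (Multiset.mem_of_le (Multiset.sub_le_self _ _) hq₁) _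
        (Multiset.mem_of_le (Multiset.sub_le_self _ _) hq₂)) hp
  have hL₂ : 0 ≤ (L₂.map fun z => ddiag z ^ p).sum :=
    Multiset.sum_nonneg fun _ hx => by
      obtain ⟨z, -, rfl⟩ := Multiset.mem_map.1 hx
      exact Real.rpow_nonneg (by unfold ddiag; positivity) p
  calc costp p D₁ D₂ (M + Z)
      = (M.map fun q => dist q.1 q.2 ^ p).sum + (Z.map fun q => dist q.1 q.2 ^ p).sum := by
        rw [costp_of_map_fst_eq_of_map_snd_eq p hfst hsnd, Multiset.map_add, Multiset.sum_add]
    _ ≤ (M.map fun q => dist q.1 q.2 ^ p).sum + (L₁.map fun z => ddiag z ^ p).sum := by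
        grw [Multiset.sum_map_le_sum_map _ _ hZ, ← hZ₁, Multiset.map_map]
        rfl
    _ ≤ costp p D₁ D₂ M := by unfold costp; linarith

theorem dist_le_ddiag_of_two_mul_diam_lt {D : PD}
    (hfar : ∀ z ∈ D, 2 * Metric.diam {w : ℝ × ℝ | w ∈ D} < ddiag z) :
    ∀ z ∈ D, ∀ w ∈ D, dist z w ≤ ddiag z := fun z hz w hw => by
  have hdist := Metric.dist_le_diam_of_mem (Multiset.finite_toSet D).isBounded hz hw
  linarith [hfar z hz, hdist.trans' dist_nonneg]

theorem WD_achieved_by_perfect_matching_general (p : ℝ) (hp : 1 ≤ p) (N : ℕ)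
    (D₁ D₂ : PD) (hcard₁ : Multiset.card D₁ = N) (hcard₂ : Multiset.card D₂ = N)
    (hfar : ∀ z ∈ D₁ + D₂, 2 * Metric.diam {w : ℝ × ℝ | w ∈ D₁ + D₂} < ddiag z) :
    ∃ M : Multiset ((ℝ × ℝ) × (ℝ × ℝ)), M.map Prod.fst = D₁ ∧ M.map Prod.snd = D₂ ∧
      costp p D₁ D₂ M = WDpow p D₁ D₂ ∧
      ∀ M' : Multiset ((ℝ × ℝ) × (ℝ × ℝ)), M'.map Prod.fst = D₁ → M'.map Prod.snd = D₂ →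
        costp p D₁ D₂ M ≤ costp p D₁ D₂ M' := by
  have hcard : Multiset.card D₁ = Multiset.card D₂ := hcard₁.trans hcard₂.symm
  have hclose : ∀ z ∈ D₁, ∀ w ∈ D₂, dist z w ≤ ddiag z := fun z hz w hw =>
    dist_le_ddiag_of_two_mul_diam_lt hfar z (Multiset.mem_add.2 (.inl hz)) w
      (Multiset.mem_add.2 (.inr hw))
  obtain ⟨M, ⟨hM₁, hM₂⟩, hMmin⟩ := Set.exists_min_image _ (costp p D₁ D₂)
    (Multiset.finite_setOf_map_fst_eq_map_snd_eq D₁ D₂)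
    (Multiset.exists_map_fst_eq_map_snd_eq D₁ D₂ hcard)
  refine ⟨M, hM₁, hM₂, ?_, fun M' h₁ h₂ => hMmin M' ⟨h₁, h₂⟩⟩
  refine Eq.symm (IsLeast.csInf_eq ⟨⟨M, ⟨hM₁.le, hM₂.le⟩, rfl⟩, ?_⟩)
  rintro _ ⟨M', hM', rfl⟩
  obtain ⟨M'', h₁, h₂, hle⟩ := exists_perfect_matching_costp_le (by linarith) hcard hclose hM'
  exact (hMmin M'' ⟨h₁, h₂⟩).trans hle

/-- If all points of `D₁` and `D₂` lie strictly above the diagonal, both diagrams have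
`N` points, and every point is at distance from the diagonal strictly greater than twice
the diameter of `D₁ ∪ D₂`, then the `p`-Wasserstein distance between the diagrams is
achieved by a perfect matching, which moreover minimizes cost among perfect matchings. -/
theorem WD_achieved_by_perfect_matching (p : ℝ) (hp : 1 ≤ p) (N : ℕ) (hN : 0 < N)
    (D₁ D₂ : PD) (hcard₁ : Multiset.card D₁ = N) (hcard₂ : Multiset.card D₂ = N)
    (habove : ∀ z ∈ D₁ + D₂, z.1 < z.2)
    (hfar : ∀ z ∈ D₁ + D₂, 2 * Metric.diam {w : ℝ × ℝ | w ∈ D₁ + D₂} < ddiag z) :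
    ∃ M : Multiset ((ℝ × ℝ) × (ℝ × ℝ)), M.map Prod.fst = D₁ ∧ M.map Prod.snd = D₂ ∧
      costp p D₁ D₂ M = WDpow p D₁ D₂ ∧
      ∀ M' : Multiset ((ℝ × ℝ) × (ℝ × ℝ)), M'.map Prod.fst = D₁ → M'.map Prod.snd = D₂ →
        costp p D₁ D₂ M ≤ costp p D₁ D₂ M' :=
  WD_achieved_by_perfect_matching_general p hp N D₁ D₂ hcard₁ hcard₂ hfar
end

section
/- If s+1 equally spaced points I = {(m + t(M−m)/s, m + t(M−m)/s) : t = 0, …, s} are placed on the diagonal of ℝ² (ℓ^∞ metric), then for any two subsets S, T ⊆ I ∪ I' of equal cardinality (where I' extends the arithmetic progression by at most N further points), the order-preserving bijection ω : S → T (matching points in ascending order of coordinate) moves each point a distance at most N(M−m)/s, provided |I ∪ I'| − |S| ≤ N. -/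
/-- The `t`-th point of the arithmetic progression of diagonal points
`(m + t(M−m)/s, m + t(M−m)/s)` in the plane with the ℓ^∞ metric. -/
noncomputable def diagPt (m M : ℝ) (s : ℕ) (t : ℕ) : ℝ × ℝ :=
  (m + (t : ℝ) * (M - m) / (s : ℝ), m + (t : ℝ) * (M - m) / (s : ℝ))

lemma aux_step {k : ℕ} (f : Fin k → ℕ) (hf : StrictMono f) :
    ∀ d : ℕ, ∀ i j : Fin k, (j : ℕ) = (i : ℕ) + d → f i + d ≤ f j := by
  intro d
  induction d with
  | zero => intro i j h; have : i = j := Fin.ext h.symm; simp [this]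
  | succ d ih =>
      intro i j h
      have hj' : (i : ℕ) + d < k := by omega
      set j' : Fin k := ⟨(i : ℕ) + d, hj'⟩
      have h1 : f i + d ≤ f j' := ih i j' rfl
      have h2 : f j' < f j := hf (by simp [j', Fin.lt_def]; omega)
      omega

lemma aux_bounds {k n : ℕ} (f : Fin k → ℕ) (hf : StrictMono f)
    (hlt : ∀ i, f i < n) (i : Fin k) : (i : ℕ) ≤ f i ∧ f i ≤ n - k + i := by
  have hk : 0 < k := i.pos
  have hlast : ((i : ℕ) : ℕ) ≤ (i : ℕ) := le_refl _
  constructor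
  · have := aux_step f hf (i : ℕ) ⟨0, hk⟩ i (by simp)
    omega
  · have hlastlt : k - 1 < k := by omega
    have := aux_step f hf (k - 1 - (i : ℕ)) i ⟨k - 1, hlastlt⟩ (by simp; omega)
    have := hlt ⟨k - 1, hlastlt⟩
    have := i.isLt
    omega

/-- Consider `n` equally spaced points on the diagonal indexed by `0, …, n-1`, where the
progression consists of the `s+1` points of `I` extended by at most `N` further points
(so `n ≤ s+1+N`).  If `S, T ⊆ {0, …, n-1}` have equal cardinality `k` with
`n − k ≤ N`, then the order-preserving bijection matching the `i`-th smallest element of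
`S` to the `i`-th smallest element of `T` moves each point a distance at most
`N(M−m)/s`. -/
theorem monotone_matching_displacement (m M : ℝ) (hMm : m ≤ M) (s N n k : ℕ)
    (hs : 0 < s) (hn : n ≤ s + 1 + N) (S T : Finset ℕ)
    (hS : S ⊆ Finset.range n) (hT : T ⊆ Finset.range n)
    (hScard : S.card = k) (hTcard : T.card = k) (hk : n - k ≤ N) :
    ∀ i : Fin k,
      dist (diagPt m M s (S.orderIsoOfFin hScard i : ℕ))
          (diagPt m M s (T.orderIsoOfFin hTcard i : ℕ)) ≤
        (N : ℝ) * (M - m) / (s : ℝ) := by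
  intro i
  set a : ℕ := (S.orderIsoOfFin hScard i : ℕ)
  set b : ℕ := (T.orderIsoOfFin hTcard i : ℕ)
  have hfS : StrictMono (fun j : Fin k => (S.orderIsoOfFin hScard j : ℕ)) := by
    intro x y hxy
    exact (S.orderIsoOfFin hScard).strictMono hxy
  have hfT : StrictMono (fun j : Fin k => (T.orderIsoOfFin hTcard j : ℕ)) := by
    intro x y hxy
    exact (T.orderIsoOfFin hTcard).strictMono hxy
  have hltS : ∀ j : Fin k, (S.orderIsoOfFin hScard j : ℕ) < n := fun j =>
    Finset.mem_range.mp (hS (S.orderIsoOfFin hScard j).2)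
  have hltT : ∀ j : Fin k, (T.orderIsoOfFin hTcard j : ℕ) < n := fun j =>
    Finset.mem_range.mp (hT (T.orderIsoOfFin hTcard j).2)
  have hA := aux_bounds _ hfS hltS i
  have hB := aux_bounds _ hfT hltT i
  have hab : (a : ℤ) - b ≤ N ∧ (b : ℤ) - a ≤ N := by
    simp only [a, b]; omega
  have hc : (0:ℝ) ≤ (M - m) / s := div_nonneg (sub_nonneg.mpr hMm) (Nat.cast_nonneg s)
  have hdist : dist (diagPt m M s a) (diagPt m M s b) = |(a : ℝ) - b| * ((M - m) / s) := by
    simp only [diagPt, Prod.dist_eq, Real.dist_eq, max_self]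
    rw [show m + (a:ℝ)*(M-m)/s - (m + (b:ℝ)*(M-m)/s) = ((a:ℝ)-b)*((M-m)/s) by ring]
    rw [abs_mul, abs_of_nonneg hc]
  rw [hdist, mul_div_assoc]
  apply mul_le_mul_of_nonneg_right _ hc
  rw [abs_sub_le_iff]
  constructor
  · exact_mod_cast hab.1
  · exact_mod_cast hab.2
end
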